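/- Suppose f guesses Col(ω,ω₁)-filters and witnesses ◇(ω₁^{<ω}), and let b, b' ∈ Col(ω,ω₁). Then b and b' are compatible in Col(ω,ω₁) if and only if S^f_b ∩ S^f_{b'} is stationary in ω₁. -/

import Mathlib

open Set

noncomputable section

/-- The first uncountable ordinal `ω₁`. -/
def omega1 : Ordinal := (Cardinal.aleph 1).ord

/-- `C` is a club (closed unbounded) subset of `ω₁`. -/
def IsClubω₁ (C : Set Ordinal) : Prop :=
  C ⊆ Set.Iio omega1 ∧
  (∀ o < omega1, ∃ c ∈ C, o < c) ∧
  (∀ s : Set Ordinal, s ⊆ C → s.Nonempty → sSup s < omega1 → sSup s ∈ C)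

/-- `S` is a stationary subset of `ω₁`. -/
def IsStationaryω₁ (S : Set Ordinal) : Prop :=
  S ⊆ Set.Iio omega1 ∧ ∀ C : Set Ordinal, IsClubω₁ C → (S ∩ C).Nonempty

/-- Finite partial functions `ω ⇀ ω₁`, coded as functional finsets of pairs with
values below `ω₁`. -/
def IsCond (p : Finset (ℕ × Ordinal)) : Prop :=
  (∀ x ∈ p, x.2 < omega1) ∧ ∀ x ∈ p, ∀ y ∈ p, x.1 = y.1 → x.2 = y.2

/-- The forcing `Col(ω,ω₁)`. -/
def Col : Type _ := {p : Finset (ℕ × Ordinal) // IsCond p}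

/-- `p ≤ q` iff `p` extends `q`. -/
instance : LE Col := ⟨fun p q => q.1 ⊆ p.1⟩

/-- Two conditions are compatible iff they have a common extension. -/
def Col.Compatible (p q : Col) : Prop := ∃ r : Col, r ≤ p ∧ r ≤ q

/-- `Col(ω,ω₁) ∩ α`: conditions with range contained in `α`. -/
def colBelow (α : Ordinal) : Set Col := {p | ∀ x ∈ p.1, x.2 < α}

/-- `F` is a filter on the suborder `B` of `Col(ω,ω₁)` (the empty set counts as a
filter): upward closed within `B` and directed. -/
def IsColFilter (B F : Set Col) : Prop :=
  F ⊆ B ∧ (∀ p ∈ F, ∀ q ∈ B, p ≤ q → q ∈ F) ∧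
  ∀ p ∈ F, ∀ q ∈ F, ∃ r ∈ F, r ≤ p ∧ r ≤ q

/-- `f` guesses `Col(ω,ω₁)`-filters. -/
def Guesses (f : Ordinal → Set Col) : Prop :=
  ∀ α < omega1, IsColFilter (colBelow α) (f α)

/-- `S^f_b = {α < ω₁ : b ∈ f(α)}`. -/
def Sfb (f : Ordinal → Set Col) (b : Col) : Set Ordinal :=
  {α | α < omega1 ∧ b ∈ f α}

/-- `D` is dense in `Col(ω,ω₁)`. -/
def ColDense (D : Set Col) : Prop := ∀ p : Col, ∃ q ∈ D, q ≤ p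

/-- `S ⊆ ω₁` is `f`-stationary. -/
def fStationary (f : Ordinal → Set Col) (S : Set Ordinal) : Prop :=
  S ⊆ Set.Iio omega1 ∧
  ∀ D : Ordinal → Set Col, (∀ β < omega1, ColDense (D β)) →
    IsStationaryω₁ {α | α ∈ S ∧ ∀ β < α, (f α ∩ D β).Nonempty}

/-- `f` witnesses `◇(ω₁^{<ω})`. -/
def WitnessesDiamond (f : Ordinal → Set Col) : Prop :=
  Guesses f ∧ ∀ b : Col, fStationary f (Sfb f b)

/-- If `f` witnesses `◇(ω₁^{<ω})` then two conditions `b, b'` of `Col(ω,ω₁)` are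
compatible iff `S^f_b ∩ S^f_{b'}` is stationary. -/
theorem compatible_iff_inter_stationary (f : Ordinal → Set Col)
    (hf : WitnessesDiamond f) (b b' : Col) :
    Col.Compatible b b' ↔ IsStationaryω₁ (Sfb f b ∩ Sfb f b') := by
  obtain ⟨hg, hs⟩ := hf
  constructor
  · rintro ⟨r, hrb, hrb'⟩
    have key : ∀ c : Col, r ≤ c → Sfb f r ⊆ Sfb f c := by
      rintro c hrc α ⟨hα, hr⟩
      obtain ⟨hsub, hup, hdir⟩ := hg α hα
      have hrB : r ∈ colBelow α := hsub hr
      have hcB : c ∈ colBelow α := fun x hx => hrB x (hrc hx)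
      exact ⟨hα, hup r hr c hcB hrc⟩
    have hst := (hs r).2 (fun _ => Set.univ) (fun β _ p => ⟨p, Set.mem_univ p, fun _ h => h⟩)
    constructor
    · rintro α ⟨⟨hα, _⟩, _⟩
      exact hα
    · intro C hC
      obtain ⟨α, hαT, hαC⟩ := hst.2 C hC
      exact ⟨α, ⟨key b hrb hαT.1, key b' hrb' hαT.1⟩, hαC⟩
  · rintro ⟨hsub, hmeet⟩
    have hlim : Order.IsSuccLimit (Cardinal.aleph 1).ord :=
      Cardinal.isSuccLimit_ord (by simpa using Cardinal.aleph0_le_aleph 1)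
    have hclub : IsClubω₁ (Set.Iio omega1) := by
      refine ⟨subset_rfl, ?_, ?_⟩
      · intro o ho
        exact ⟨o + 1, hlim.succ_lt ho, lt_add_one o⟩
      · intro s _ _ h
        exact h
    obtain ⟨α, ⟨⟨hα, hbα⟩, ⟨_, hb'α⟩⟩, _⟩ := hmeet _ hclub
    obtain ⟨_, _, hdir⟩ := hg α hα
    obtain ⟨q, _, hqb, hqb'⟩ := hdir b hbα b' hb'α
    exact ⟨q, hqb, hqb'⟩
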